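/- For q ∈ (0,1], let X₂ := q|φ₂⁺⟩⟨φ₂⁺| + (1−q)|01⟩⟨01| on ℂ² ⊗ ℂ². Then F(X₂) ≤ 1/2 if and only if q ≤ 1/2. -/

import Mathlib

open Matrix Kronecker Complex
open scoped ComplexOrder

/-- The canonical maximally entangled vector `|ψ⁺⟩ = (1/√d) ∑ᵢ |ii⟩` on `ℂ^d ⊗ ℂ^d`. -/
noncomputable def psiPlus (d : ℕ) : (Fin d × Fin d) → ℂ :=
  fun p => if p.1 = p.2 then ((Real.sqrt d)⁻¹ : ℝ) else 0

/-- The fully entangled fraction: the supremum over `d × d` unitaries `V` of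
`⟨ψ⁺| (I ⊗ V)† ρ (I ⊗ V) |ψ⁺⟩`. -/
noncomputable def fef (d : ℕ) (ρ : Matrix (Fin d × Fin d) (Fin d × Fin d) ℂ) : ℝ :=
  ⨆ V : Matrix.unitaryGroup (Fin d) ℂ,
    (star (psiPlus d) ⬝ᵥ
      ((((1 : Matrix (Fin d) (Fin d) ℂ) ⊗ₖ (V : Matrix (Fin d) (Fin d) ℂ))ᴴ * ρ *
        ((1 : Matrix (Fin d) (Fin d) ℂ) ⊗ₖ (V : Matrix (Fin d) (Fin d) ℂ))) *ᵥ psiPlus d)).re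

/-- A density matrix: positive semidefinite with unit trace. -/
def IsDensityMatrix {n : Type*} [Fintype n] (ρ : Matrix n n ℂ) : Prop :=
  ρ.PosSemidef ∧ ρ.trace = 1

/-- `ρ` has absolute fully entangled fraction: `F(UρU†) ≤ 1/d` for every unitary `U`. -/
def AbsFEF (d : ℕ) (ρ : Matrix (Fin d × Fin d) (Fin d × Fin d) ℂ) : Prop :=
  ∀ U ∈ Matrix.unitaryGroup (Fin d × Fin d) ℂ, fef d (U * ρ * Uᴴ) ≤ 1 / d

/-- Basis vector `|ij⟩` of `ℂ^d ⊗ ℂ^d`. -/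
def ket (d : ℕ) (i j : Fin d) : (Fin d × Fin d) → ℂ :=
  fun p => if p = (i, j) then 1 else 0

/-- Rank-one projector `|v⟩⟨v|`. -/
def proj {n : Type*} (v : n → ℂ) : Matrix n n ℂ :=
  Matrix.vecMulVec v (star v)

/-- The state `X₂ = q|φ₂⁺⟩⟨φ₂⁺| + (1−q)|01⟩⟨01|`. -/
noncomputable def X₂ (q : ℝ) : Matrix (Fin 2 × Fin 2) (Fin 2 × Fin 2) ℂ :=
  (q : ℂ) • proj (psiPlus 2) + ((1 - q : ℝ) : ℂ) • proj (ket 2 0 1)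

/-!
With `w = (I ⊗ V)|ψ⁺⟩`, whose entries are `w (i, j) = V j i / √2`, the fidelity of `X₂ q` is
`q |tr V|² / 4 + (1 - q) |V₁₀|² / 2`. For a unitary `V` both `|V₀₀|²` and `|V₁₁|²` equal
`1 - t` with `t = |V₁₀|²`, so the parallelogram law bounds the fidelity by the convex combination
`(1 - t) q + t (1 - q) / 2`; the endpoints are attained at `V = I` and at the swap matrix.
Hence `F(X₂ q) = max q ((1 - q) / 2)`, and the second term never exceeds `1/2` since `q ≥ 0`.
-/

theorem sum_normSq_apply_of_mem_unitaryGroup {n : Type*} [Fintype n] [DecidableEq n]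
    {U : Matrix n n ℂ} (hU : U ∈ unitaryGroup n ℂ) (i : n) :
    ∑ j, normSq (U i j) = 1 := by
  have h := congrFun₂ (mem_unitaryGroup_iff.1 hU) i i
  simp only [mul_apply, star_apply, one_apply_eq, ← starRingEnd_apply, mul_conj] at h
  exact_mod_cast h

theorem sum_normSq_apply_of_mem_unitaryGroup' {n : Type*} [Fintype n] [DecidableEq n]
    {U : Matrix n n ℂ} (hU : U ∈ unitaryGroup n ℂ) (j : n) :
    ∑ i, normSq (U i j) = 1 := by
  simpa using sum_normSq_apply_of_mem_unitaryGroup (Unitary.star_mem hU) j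

theorem permMatrix_mem_unitaryGroup {n : Type*} [Fintype n] [DecidableEq n]
    (σ : Equiv.Perm n) : σ.permMatrix ℂ ∈ unitaryGroup n ℂ := by
  rw [mem_unitaryGroup_iff, star_eq_conjTranspose, conjTranspose_permMatrix,
    ← permMatrix_mul, inv_mul_cancel, permMatrix_one]

theorem normSq_add_le_two_mul (a b : ℂ) : normSq (a + b) ≤ 2 * (normSq a + normSq b) := by
  linarith [normSq_add a b, normSq_sub a b, normSq_nonneg (a - b)]

theorem star_dotProduct_proj_mulVec {n : Type*} [Fintype n] (v w : n → ℂ) :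
    star w ⬝ᵥ (proj v *ᵥ w) = normSq (star v ⬝ᵥ w) := by
  rw [proj, vecMulVec_mulVec, op_smul_eq_smul, dotProduct_smul, smul_eq_mul, star_dotProduct w v,
    star_def, mul_conj]

theorem star_ket_dotProduct (d : ℕ) (i j : Fin d) (w : Fin d × Fin d → ℂ) :
    star (ket d i j) ⬝ᵥ w = w (i, j) := by
  simp [ket, dotProduct, apply_ite star]

theorem kronecker_mulVec_psiPlus (d : ℕ) (V : Matrix (Fin d) (Fin d) ℂ) :
    (1 ⊗ₖ V) *ᵥ psiPlus d = fun p => V p.2 p.1 / Real.sqrt d := by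
  ext ⟨i, j⟩
  simp [mulVec, dotProduct, psiPlus, one_apply, Fintype.sum_prod_type, div_eq_mul_inv]

theorem star_psiPlus_dotProduct_kronecker_mulVec (d : ℕ) (V : Matrix (Fin d) (Fin d) ℂ) :
    star (psiPlus d) ⬝ᵥ ((1 ⊗ₖ V) *ᵥ psiPlus d) = V.trace / d := by
  rw [kronecker_mulVec_psiPlus]
  simp only [dotProduct, psiPlus, Fintype.sum_prod_type, trace, diag, Finset.sum_div, Pi.star_apply,
    apply_ite star, star_zero, ite_mul, zero_mul, Finset.sum_ite_eq, Finset.mem_univ, if_true]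
  refine Finset.sum_congr rfl fun i _ => ?_
  have hsqrt : (Real.sqrt d : ℂ) * Real.sqrt d = d := by
    exact_mod_cast Real.mul_self_sqrt d.cast_nonneg
  rw [← hsqrt]
  simp only [ofReal_inv, star_inv₀, RCLike.star_def, conj_ofReal, div_eq_mul_inv,
    _root_.mul_inv_rev]
  ring

noncomputable def maxEntFidelity (d : ℕ) (ρ : Matrix (Fin d × Fin d) (Fin d × Fin d) ℂ)
    (V : Matrix (Fin d) (Fin d) ℂ) : ℝ :=
  (star (psiPlus d) ⬝ᵥ
    ((((1 : Matrix (Fin d) (Fin d) ℂ) ⊗ₖ V)ᴴ * ρ * ((1 : Matrix (Fin d) (Fin d) ℂ) ⊗ₖ V)) *ᵥ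
      psiPlus d)).re

theorem fef_eq_iSup_maxEntFidelity (d : ℕ) (ρ : Matrix (Fin d × Fin d) (Fin d × Fin d) ℂ) :
    fef d ρ = ⨆ V : unitaryGroup (Fin d) ℂ, maxEntFidelity d ρ V :=
  rfl

theorem maxEntFidelity_eq (d : ℕ) (ρ : Matrix (Fin d × Fin d) (Fin d × Fin d) ℂ)
    (V : Matrix (Fin d) (Fin d) ℂ) :
    maxEntFidelity d ρ V =
      (star ((1 ⊗ₖ V) *ᵥ psiPlus d) ⬝ᵥ (ρ *ᵥ ((1 ⊗ₖ V) *ᵥ psiPlus d))).re := by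
  rw [maxEntFidelity, ← mulVec_mulVec, ← mulVec_mulVec, dotProduct_mulVec, star_mulVec]

theorem maxEntFidelity_X₂ (q : ℝ) (V : Matrix (Fin 2) (Fin 2) ℂ) :
    maxEntFidelity 2 (X₂ q) V = q / 4 * normSq V.trace + (1 - q) / 2 * normSq (V 1 0) := by
  rw [maxEntFidelity_eq, X₂, add_mulVec, smul_mulVec, smul_mulVec, dotProduct_add,
    dotProduct_smul, dotProduct_smul, star_dotProduct_proj_mulVec, star_dotProduct_proj_mulVec,
    star_psiPlus_dotProduct_kronecker_mulVec, star_ket_dotProduct, kronecker_mulVec_psiPlus]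
  norm_cast
  rw [normSq_div, normSq_div, normSq_ofReal, Real.mul_self_sqrt zero_le_two]
  norm_num
  ring

theorem maxEntFidelity_X₂_le {q : ℝ} (hq : 0 ≤ q) {V : Matrix (Fin 2) (Fin 2) ℂ}
    (hV : V ∈ unitaryGroup (Fin 2) ℂ) : maxEntFidelity 2 (X₂ q) V ≤ max q ((1 - q) / 2) := by
  have hcol : normSq (V 0 0) + normSq (V 1 0) = 1 := by
    simpa [Fin.sum_univ_two] using sum_normSq_apply_of_mem_unitaryGroup' hV 0
  have hrow : normSq (V 1 0) + normSq (V 1 1) = 1 := by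
    simpa [Fin.sum_univ_two] using sum_normSq_apply_of_mem_unitaryGroup hV 1
  set t := normSq (V 1 0)
  have ht0 : 0 ≤ t := normSq_nonneg _
  have ht1 : t ≤ 1 := by linarith [normSq_nonneg (V 0 0)]
  rw [maxEntFidelity_X₂, trace_fin_two]
  calc q / 4 * normSq (V 0 0 + V 1 1) + (1 - q) / 2 * t
      ≤ (1 - t) * q + t * ((1 - q) / 2) := by
        nlinarith [normSq_add_le_two_mul (V 0 0) (V 1 1)]
    _ ≤ (1 - t) * max q ((1 - q) / 2) + t * max q ((1 - q) / 2) := by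
        gcongr
        · exact le_max_left _ _
        · exact le_max_right _ _
    _ = max q ((1 - q) / 2) := by ring

theorem fef_X₂ {q : ℝ} (hq : 0 ≤ q) : fef 2 (X₂ q) = max q ((1 - q) / 2) := by
  have hbdd : BddAbove (Set.range fun V : unitaryGroup (Fin 2) ℂ => maxEntFidelity 2 (X₂ q) V) :=
    ⟨_, Set.forall_mem_range.2 fun V => maxEntFidelity_X₂_le hq V.2⟩
  rw [fef_eq_iSup_maxEntFidelity]
  refine le_antisymm (ciSup_le fun V => maxEntFidelity_X₂_le hq V.2) (max_le ?_ ?_)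
  · calc q = maxEntFidelity 2 (X₂ q) (1 : unitaryGroup (Fin 2) ℂ) := by
          norm_num [maxEntFidelity_X₂]
      _ ≤ _ := le_ciSup hbdd 1
  · let swap : unitaryGroup (Fin 2) ℂ :=
      ⟨(Equiv.swap 0 1).permMatrix ℂ, permMatrix_mem_unitaryGroup _⟩
    calc (1 - q) / 2 = maxEntFidelity 2 (X₂ q) swap := by
          simp [swap, maxEntFidelity_X₂, trace_fin_two, Equiv.Perm.permMatrix,
            PEquiv.toMatrix_apply]
      _ ≤ _ := le_ciSup hbdd swap

theorem fef_X₂_le_half_iff_general (q : ℝ) (hq0 : 0 < q) :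
    fef 2 (X₂ q) ≤ 1/2 ↔ q ≤ 1/2 := by
  rw [fef_X₂ hq0.le, max_le_iff]
  exact ⟨And.left, fun hq => ⟨hq, by linarith⟩⟩

/-- For `q ∈ (0,1]`, the fully entangled fraction of `X₂` is at most `1/2` iff `q ≤ 1/2`. -/
theorem fef_X₂_le_half_iff (q : ℝ) (hq0 : 0 < q) (hq1 : q ≤ 1) :
    fef 2 (X₂ q) ≤ 1/2 ↔ q ≤ 1/2 :=
  fef_X₂_le_half_iff_general q hq0
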